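/- arXiv:2501.02995 — 4 statements merged into one kernel-verified Lean document; each statement's English description precedes it below -/
import Mathlib

section
/- Let Γ be a bounded linear nonnegative self-adjoint operator on a Hilbert space H, π_D the orthogonal projection onto a finite-dimensional subspace, and suppose β := sup_{0<α≤1} ‖α(αI + Γ)^{-1}π_D‖ < 1. Then for every α ∈ (0,1] and h ∈ H, ‖α(α(I − π_D) + Γ)^{-1} h‖ ≤ (1/(1 − β)) ‖α(αI + Γ)^{-1} h‖, assuming α(I − π_D) + Γ is invertible. -/
/-!
Write `A = α(I − P) + Γ` and `B = αI + Γ`, so that `B − A = αP`. From `A Q = 1` and `R B = 1`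
we get the resolvent identity `Q = R + R (αP) Q`, i.e. `αQ h = αR h + (αRP)(αQ h)`. Since
`‖αRP‖ ≤ β < 1`, the fixed-point bound `‖u‖ ≤ ‖w‖ + β‖u‖` gives `‖αQ h‖ ≤ ‖αR h‖ / (1 − β)`.
-/

open scoped RealInnerProductSpace

theorem eq_add_mul_sub_mul_of_mul_eq_one {R : Type*} [Ring R] {a b l r : R}
    (hl : l * b = 1) (hr : a * r = 1) : r = l + l * (b - a) * r := by
  calc r = l * b * r := by rw [hl, one_mul]
    _ = l + l * (b - a) * r := by rw [mul_sub, sub_mul, mul_assoc l a r, hr, mul_one]; abel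

theorem norm_le_one_div_one_sub_mul_of_eq_add_apply {𝕜 E : Type*} [NontriviallyNormedField 𝕜]
    [SeminormedAddCommGroup E] [NormedSpace 𝕜 E] {T : E →L[𝕜] E} {β : ℝ} {u w : E}
    (hβ : β < 1) (hT : ‖T‖ ≤ β) (hu : u = w + T u) : ‖u‖ ≤ 1 / (1 - β) * ‖w‖ := by
  have hbound : ‖u‖ ≤ ‖w‖ + β * ‖u‖ :=
    calc ‖u‖ = ‖w + T u‖ := congrArg norm hu
      _ ≤ ‖w‖ + ‖T u‖ := norm_add_le _ _
      _ ≤ ‖w‖ + β * ‖u‖ := by gcongr; exact T.le_of_opNorm_le hT u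
  rw [one_div_mul_eq_div, le_div_iff₀ (sub_pos.mpr hβ)]
  linarith

theorem stmt6_general
    {H : Type*} [NormedAddCommGroup H] [InnerProductSpace ℝ H]
    (P : H →L[ℝ] H)
    (Γ : H →L[ℝ] H)
    (R : ℝ → (H →L[ℝ] H))
    (hR₂ : ∀ α ∈ Set.Ioc (0:ℝ) 1, (R α).comp (α • (1 : H →L[ℝ] H) + Γ) = 1)
    (Q : ℝ → (H →L[ℝ] H))
    (hQ₁ : ∀ α ∈ Set.Ioc (0:ℝ) 1, (α • (1 - P) + Γ).comp (Q α) = 1)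
    (β : ℝ) (hβ : β < 1)
    (hβsup : ∀ α ∈ Set.Ioc (0:ℝ) 1, ‖α • ((R α).comp P)‖ ≤ β) :
    ∀ α ∈ Set.Ioc (0:ℝ) 1, ∀ h : H,
      ‖(α • Q α) h‖ ≤ (1 / (1 - β)) * ‖(α • R α) h‖ := by
  intro α hα h
  have hres : Q α = R α + R α * (α • P) * Q α := by
    have hdiff : (α • (1 : H →L[ℝ] H) + Γ) - (α • (1 - P) + Γ) = α • P := by
      rw [smul_sub]; abel
    simpa only [hdiff] using eq_add_mul_sub_mul_of_mul_eq_one (hR₂ α hα) (hQ₁ α hα)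
  refine norm_le_one_div_one_sub_mul_of_eq_add_apply hβ (hβsup α hα) ?_
  conv_lhs => rw [hres]
  simp only [smul_apply, add_apply, mul_apply_eq_comp,
    ContinuousLinearMap.comp_apply, map_smul, smul_add]

theorem stmt6
    {H : Type*} [NormedAddCommGroup H] [InnerProductSpace ℝ H] [CompleteSpace H]
    (D : Submodule ℝ H) [FiniteDimensional ℝ D]
    (P : H →L[ℝ] H) (hP : P = D.subtypeL.comp (D.orthogonalProjectionOnto))
    (Γ : H →L[ℝ] H) (hsa : IsSelfAdjoint Γ) (hnn : ∀ x : H, 0 ≤ ⟪Γ x, x⟫)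
    (R : ℝ → (H →L[ℝ] H))
    (hR₁ : ∀ α ∈ Set.Ioc (0:ℝ) 1, (α • (1 : H →L[ℝ] H) + Γ).comp (R α) = 1)
    (hR₂ : ∀ α ∈ Set.Ioc (0:ℝ) 1, (R α).comp (α • (1 : H →L[ℝ] H) + Γ) = 1)
    (Q : ℝ → (H →L[ℝ] H))
    (hQ₁ : ∀ α ∈ Set.Ioc (0:ℝ) 1, (α • (1 - P) + Γ).comp (Q α) = 1)
    (hQ₂ : ∀ α ∈ Set.Ioc (0:ℝ) 1, (Q α).comp (α • (1 - P) + Γ) = 1)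
    (β : ℝ) (hβ : β < 1)
    (hβsup : ∀ α ∈ Set.Ioc (0:ℝ) 1, ‖α • ((R α).comp P)‖ ≤ β) :
    ∀ α ∈ Set.Ioc (0:ℝ) 1, ∀ h : H,
      ‖(α • Q α) h‖ ≤ (1 / (1 - β)) * ‖(α • R α) h‖ :=
  stmt6_general P Γ R hR₂ Q hQ₁ β hβ hβsup
end

section
/- Let Γ be a bounded linear nonnegative self-adjoint operator on a Hilbert space H and π_D the orthogonal projection onto a finite-dimensional subspace. If α(αI + Γ)^{-1} → 0 strongly as α → 0⁺ (i.e. for every h ∈ H, ‖α(αI + Γ)^{-1}h‖ → 0), then also α(α(I − π_D) + Γ)^{-1} → 0 strongly as α → 0⁺, provided sup_{0<α≤1}‖α(αI + Γ)^{-1}π_D‖ < 1 and the operators α(I − π_D) + Γ are invertible. -/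
open scoped RealInnerProductSpace
open Filter Topology

/-
Write `A = αI + Γ`, `R = A⁻¹` and `T = α R π_D`. Since `α(I - π_D) + Γ = A - απ_D`, the
resolvent identity `(I - T) Q = R` holds, so `αQh = αRh + T(αQh)`. As `‖T‖ ≤ β < 1`, this gives
`‖αQh‖ ≤ ‖αRh‖ / (1 - β)` for `0 < α ≤ 1`, and the claim follows from the strong convergence of
`αR` to `0`.
-/

theorem one_sub_mul_mul_eq_of_mul_eq_one {S : Type*} [Ring S] {r a b q : S}
    (hr : r * a = 1) (hq : (a - b) * q = 1) : (1 - r * b) * q = r := by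
  calc (1 - r * b) * q = r * ((a - b) * q) := by
        rw [← mul_assoc, mul_sub, hr]
    _ = r := by rw [hq, mul_one]

section NormedSpace

variable {𝕜 E : Type*} [NontriviallyNormedField 𝕜] [SeminormedAddCommGroup E] [NormedSpace 𝕜 E]

theorem ContinuousLinearMap.norm_le_div_of_sub_apply_eq {T : E →L[𝕜] E} {β : ℝ}
    (hT : ‖T‖ ≤ β) (hβ : β < 1) {x y : E} (h : x - T x = y) : ‖x‖ ≤ ‖y‖ / (1 - β) := by
  have hx : ‖x‖ ≤ ‖y‖ + β * ‖x‖ :=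
    calc ‖x‖ = ‖y + T x‖ := by rw [← h, sub_add_cancel]
      _ ≤ ‖y‖ + ‖T‖ * ‖x‖ := (norm_add_le _ _).trans (by gcongr; exact T.le_opNorm x)
      _ ≤ ‖y‖ + β * ‖x‖ := by gcongr
  rw [le_div_iff₀ (by linarith)]
  linarith

theorem ContinuousLinearMap.norm_smul_apply_le_of_perturbed_inverse
    {A B R Q : E →L[𝕜] E} {c : 𝕜} {β : ℝ} (hR : R * A = 1) (hQ : (A - c • B) * Q = 1)
    (hβ : ‖c • (R * B)‖ ≤ β) (hβ1 : β < 1) (h : E) :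
    ‖(c • Q) h‖ ≤ ‖(c • R) h‖ / (1 - β) := by
  have hRQ : (1 - c • (R * B)) * Q = R := by
    rw [← mul_smul_comm]
    exact one_sub_mul_mul_eq_of_mul_eq_one hR hQ
  refine norm_le_div_of_sub_apply_eq hβ hβ1 ?_
  have := congrArg (fun S : E →L[𝕜] E => c • S h) hRQ
  simpa only [sub_mul, one_mul, smul_mul_assoc, sub_apply, smul_apply, mul_apply_eq_comp, map_smul,
    smul_sub] using this

end NormedSpace

theorem stmt7_general
    {H : Type*} [NormedAddCommGroup H] [InnerProductSpace ℝ H]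
    (P : H →L[ℝ] H)
    (Γ : H →L[ℝ] H)
    (R : ℝ → (H →L[ℝ] H))
    (hR₂ : ∀ α > (0:ℝ), (R α).comp (α • (1 : H →L[ℝ] H) + Γ) = 1)
    (Q : ℝ → (H →L[ℝ] H))
    (hQ₁ : ∀ α > (0:ℝ), (α • (1 - P) + Γ).comp (Q α) = 1)
    (β : ℝ) (hβ : β < 1)
    (hβsup : ∀ α ∈ Set.Ioc (0:ℝ) 1, ‖α • ((R α).comp P)‖ ≤ β)
    (hstrong : ∀ h : H,
      Filter.Tendsto (fun α : ℝ => ‖(α • R α) h‖) (nhdsWithin 0 (Set.Ioi 0)) (nhds 0)) :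
    ∀ h : H,
      Filter.Tendsto (fun α : ℝ => ‖(α • Q α) h‖) (nhdsWithin 0 (Set.Ioi 0)) (nhds 0) := by
  intro h
  have hsplit (α : ℝ) : α • (1 - P) + Γ = (α • 1 + Γ) - α • P := by
    rw [smul_sub]; abel
  have hbound : ∀ α ∈ Set.Ioc (0:ℝ) 1, ‖(α • Q α) h‖ ≤ ‖(α • R α) h‖ / (1 - β) := by
    intro α hα
    refine ContinuousLinearMap.norm_smul_apply_le_of_perturbed_inverse (hR₂ α hα.1) ?_
      (hβsup α hα) hβ h
    rw [← hsplit]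
    exact hQ₁ α hα.1
  have hIoc : Set.Ioc (0:ℝ) 1 ∈ 𝓝[>] 0 := Ioc_mem_nhdsGT one_pos
  have hlim : Tendsto (fun α : ℝ => ‖(α • R α) h‖ / (1 - β)) (𝓝[>] 0) (𝓝 0) := by
    simpa using (hstrong h).div_const (1 - β)
  exact squeeze_zero' (Eventually.of_forall fun _ => norm_nonneg _)
    (eventually_of_mem hIoc hbound) hlim

theorem stmt7
    {H : Type*} [NormedAddCommGroup H] [InnerProductSpace ℝ H] [CompleteSpace H]
    (D : Submodule ℝ H) [FiniteDimensional ℝ D]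
    (P : H →L[ℝ] H) (hP : P = D.subtypeL.comp (D.orthogonalProjectionOnto))
    (Γ : H →L[ℝ] H) (hsa : IsSelfAdjoint Γ) (hnn : ∀ x : H, 0 ≤ ⟪Γ x, x⟫)
    (R : ℝ → (H →L[ℝ] H))
    (hR₁ : ∀ α > (0:ℝ), (α • (1 : H →L[ℝ] H) + Γ).comp (R α) = 1)
    (hR₂ : ∀ α > (0:ℝ), (R α).comp (α • (1 : H →L[ℝ] H) + Γ) = 1)
    (Q : ℝ → (H →L[ℝ] H))
    (hQ₁ : ∀ α > (0:ℝ), (α • (1 - P) + Γ).comp (Q α) = 1)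
    (hQ₂ : ∀ α > (0:ℝ), (Q α).comp (α • (1 - P) + Γ) = 1)
    (β : ℝ) (hβ : β < 1)
    (hβsup : ∀ α ∈ Set.Ioc (0:ℝ) 1, ‖α • ((R α).comp P)‖ ≤ β)
    (hstrong : ∀ h : H,
      Filter.Tendsto (fun α : ℝ => ‖(α • R α) h‖) (nhdsWithin 0 (Set.Ioi 0)) (nhds 0)) :
    ∀ h : H,
      Filter.Tendsto (fun α : ℝ => ‖(α • Q α) h‖) (nhdsWithin 0 (Set.Ioi 0)) (nhds 0) :=
  stmt7_general P Γ R hR₂ Q hQ₁ β hβ hβsup hstrong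
end

section
/- Let Γ be a bounded linear self-adjoint nonnegative operator on a Hilbert space H. Then Γ is strictly positive (⟨Γh, h⟩ > 0 for all h ≠ 0) if and only if α(αI + Γ)^{-1} → 0 as α → 0⁺ in the strong operator topology. -/
/-!
Since `Γ ≥ 0`, the operators `α (α + Γ)⁻¹` have norm at most `1`, so their strong convergence to
`0` only needs to be checked on a dense subspace. If `Γ` is strictly positive it is injective and,
being self-adjoint, has dense range; on the range, `α (α + Γ)⁻¹ Γ g = α (g - α (α + Γ)⁻¹ g)` has
norm at most `2 α ‖g‖`. Conversely, if `⟪Γ h, h⟫ = 0` then `Γ h = 0` by the Cauchy–Schwarz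
inequality for the form `⟪Γ ·, ·⟫`, hence `α (α + Γ)⁻¹ h = h` for all `α > 0`, forcing `h = 0`.
-/

open scoped RealInnerProductSpace
open Filter Topology

theorem LinearMap.IsSymmetric.denseRange_of_injective {𝕜 E : Type*} [RCLike 𝕜]
    [NormedAddCommGroup E] [InnerProductSpace 𝕜 E] [CompleteSpace E] {T : E →ₗ[𝕜] E}
    (hT : T.IsSymmetric) (hinj : Function.Injective T) : DenseRange T := by
  have : (LinearMap.range T)ᗮ = ⊥ := by
    rw [hT.orthogonal_range, LinearMap.ker_eq_bot.mpr hinj]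
  simpa [DenseRange, LinearMap.coe_range] using Submodule.dense_iff_topologicalClosure_eq_top.mpr
    (Submodule.topologicalClosure_eq_top_iff.mpr this)

theorem ContinuousLinearMap.IsPositive.apply_eq_zero_of_inner_self_eq_zero {E : Type*}
    [NormedAddCommGroup E] [InnerProductSpace ℝ E] {T : E →L[ℝ] E} (hT : T.IsPositive) {x : E}
    (hx : ⟪T x, x⟫ = 0) : T x = 0 := by
  -- `t ↦ ⟪T (x + t • T x), x + t • T x⟫` is a nonnegative quadratic with no constant term.
  have quadratic : ∀ t : ℝ, 0 ≤ ⟪T (T x), T x⟫ * (t * t) + 2 * ‖T x‖ ^ 2 * t + 0 := by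
    intro t
    have h := hT.inner_nonneg_left (x + t • T x)
    simp only [map_add, map_smul, inner_add_left, inner_add_right, real_inner_smul_left,
      real_inner_smul_right, hx, hT.inner_left_eq_inner_right (T x) x,
      real_inner_self_eq_norm_sq] at h
    linarith
  simpa [discrim] using discrim_le_zero quadratic

theorem tendsto_apply_zero_of_dense_of_eventually_norm_le {𝕜 ι E F : Type*}
    [NontriviallyNormedField 𝕜] [NormedAddCommGroup E] [NormedAddCommGroup F] [NormedSpace 𝕜 E]
    [NormedSpace 𝕜 F] {l : Filter ι} {T : ι → E →L[𝕜] F} {C : ℝ} (hC : ∀ᶠ i in l, ‖T i‖ ≤ C)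
    {s : Set E} (hs : Dense s) (hT : ∀ y ∈ s, Tendsto (fun i ↦ T i y) l (𝓝 0)) (x : E) :
    Tendsto (fun i ↦ T i x) l (𝓝 0) := by
  rw [Metric.tendsto_nhds]
  intro ε hε
  obtain ⟨y, hys, hxy⟩ := hs.exists_dist_lt x (by positivity : 0 < ε / (2 * (|C| + 1)))
  filter_upwards [hC, Metric.tendsto_nhds.mp (hT y hys) (ε / 2) (half_pos hε)] with i hTi hyi
  rw [dist_zero_right] at hyi ⊢
  rw [dist_eq_norm] at hxy
  have hCxy : C * ‖x - y‖ < ε / 2 :=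
    calc C * ‖x - y‖ ≤ (|C| + 1) * ‖x - y‖ := by gcongr; linarith [le_abs_self C]
      _ < (|C| + 1) * (ε / (2 * (|C| + 1))) := by gcongr
      _ = ε / 2 := by field_simp
  calc ‖T i x‖ = ‖T i (x - y) + T i y‖ := by rw [← map_add, sub_add_cancel]
    _ ≤ ‖T i‖ * ‖x - y‖ + ‖T i y‖ := (norm_add_le _ _).trans (by gcongr; exact (T i).le_opNorm _)
    _ ≤ C * ‖x - y‖ + ‖T i y‖ := by gcongr
    _ < ε := by linarith

section Resolvent

variable {E : Type*} [NormedAddCommGroup E] [InnerProductSpace ℝ E] {Γ R : E →L[ℝ] E} {α : ℝ}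

theorem norm_smul_le_one_of_comp_eq_one (hΓ : ∀ x, 0 ≤ ⟪Γ x, x⟫) (hα : 0 < α)
    (hR : (α • (1 : E →L[ℝ] E) + Γ).comp R = 1) : ‖α • R‖ ≤ 1 := by
  refine ContinuousLinearMap.opNorm_le_bound _ zero_le_one fun h ↦ ?_
  set y := R h
  have hy : α • y + Γ y = h := by simpa using congr($hR h)
  -- `α ‖y‖² ≤ ⟪(α + Γ) y, y⟫ = ⟪h, y⟫ ≤ ‖h‖ ‖y‖`
  have hyy : α * ‖y‖ * ‖y‖ ≤ ‖h‖ * ‖y‖ := by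
    have hinner : ⟪h, y⟫ = α * (‖y‖ * ‖y‖) + ⟪Γ y, y⟫ := by
      rw [← hy, inner_add_left, real_inner_smul_left, real_inner_self_eq_norm_mul_norm]
    nlinarith [hΓ y, real_inner_le_norm h y]
  rw [smul_apply, norm_smul, Real.norm_of_nonneg hα.le, one_mul]
  rcases (norm_nonneg y).eq_or_lt with hy0 | hy0
  · rw [← hy0, mul_zero]
    exact norm_nonneg h
  · exact le_of_mul_le_mul_right hyy hy0

theorem smul_apply_add_apply_eq_of_comp_eq_one (hR : R.comp (α • (1 : E →L[ℝ] E) + Γ) = 1)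
    (g : E) : (α • R) g + R (Γ g) = g := by
  simpa using congr($hR g)

theorem norm_smul_apply_apply_le_of_comp_eq_one (hα : 0 < α)
    (hR : R.comp (α • (1 : E →L[ℝ] E) + Γ) = 1) (hRnorm : ‖α • R‖ ≤ 1) (g : E) :
    ‖(α • R) (Γ g)‖ ≤ 2 * α * ‖g‖ :=
  calc ‖(α • R) (Γ g)‖ = α * ‖g - (α • R) g‖ := by
        rw [smul_apply, norm_smul, Real.norm_of_nonneg hα.le,
          eq_sub_of_add_eq' (smul_apply_add_apply_eq_of_comp_eq_one hR g)]
    _ ≤ α * (‖g‖ + ‖α • R‖ * ‖g‖) := by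
        gcongr
        exact (norm_sub_le _ _).trans (by gcongr; exact (α • R).le_opNorm g)
    _ ≤ 2 * α * ‖g‖ := by
        nlinarith [mul_le_mul_of_nonneg_left hRnorm (mul_nonneg hα.le (norm_nonneg g))]

end Resolvent

theorem stmt8_general
    {H : Type*} [NormedAddCommGroup H] [InnerProductSpace ℝ H] [CompleteSpace H]
    (Γ : H →L[ℝ] H) (hsa : IsSelfAdjoint Γ) (hnn : ∀ x : H, 0 ≤ ⟪Γ x, x⟫)
    (R : ℝ → (H →L[ℝ] H))
    (hR₁ : ∀ α > (0:ℝ), (α • (1 : H →L[ℝ] H) + Γ).comp (R α) = 1)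
    (hR₂ : ∀ α > (0:ℝ), (R α).comp (α • (1 : H →L[ℝ] H) + Γ) = 1) :
    (∀ h : H, h ≠ 0 → 0 < ⟪Γ h, h⟫) ↔
      (∀ h : H, Filter.Tendsto (fun α : ℝ => ‖(α • R α) h‖)
        (nhdsWithin 0 (Set.Ioi 0)) (nhds 0)) := by
  have hΓ : Γ.IsPositive := (Γ.isPositive_iff').mpr ⟨hsa, hnn⟩
  have hnorm : ∀ α > (0:ℝ), ‖α • R α‖ ≤ 1 :=
    fun α hα ↦ norm_smul_le_one_of_comp_eq_one hnn hα (hR₁ α hα)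
  constructor
  · intro hpos h
    have hinj : Function.Injective Γ := (injective_iff_map_eq_zero Γ).mpr fun x hx ↦ by
      by_contra hx0
      simpa [hx] using hpos x hx0
    have hrange : ∀ y ∈ Set.range Γ, Tendsto (fun α : ℝ ↦ (α • R α) y) (𝓝[>] 0) (𝓝 0) := by
      rintro _ ⟨g, rfl⟩
      refine squeeze_zero_norm' ?_ (tendsto_nhdsWithin_of_tendsto_nhds
        (Continuous.tendsto' (by fun_prop : Continuous fun α : ℝ ↦ 2 * α * ‖g‖) 0 0 (by simp)))
      filter_upwards [self_mem_nhdsWithin] with α (hα : 0 < α)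
      exact norm_smul_apply_apply_le_of_comp_eq_one hα (hR₂ α hα) (hnorm α hα) g
    exact tendsto_zero_iff_norm_tendsto_zero.mp <| tendsto_apply_zero_of_dense_of_eventually_norm_le
      (eventually_nhdsWithin_of_forall hnorm) (hΓ.isSymmetric.denseRange_of_injective hinj) hrange h
  · intro hlim h hne
    refine (hnn h).lt_of_ne' fun hzero ↦ hne ?_
    have hΓh := hΓ.apply_eq_zero_of_inner_self_eq_zero hzero
    have hconst : ∀ α > (0:ℝ), ‖(α • R α) h‖ = ‖h‖ := fun α hα ↦ by
      simpa [hΓh] using congr(‖$(smul_apply_add_apply_eq_of_comp_eq_one (hR₂ α hα) h)‖)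
    exact norm_eq_zero.mp <| tendsto_nhds_unique' (nhdsGT_neBot 0)
      (tendsto_const_nhds.congr' (eventually_nhdsWithin_of_forall fun α hα ↦ (hconst α hα).symm))
      (hlim h)

theorem stmt8
    {H : Type*} [NormedAddCommGroup H] [InnerProductSpace ℝ H] [CompleteSpace H]
    [TopologicalSpace.SeparableSpace H]
    (Γ : H →L[ℝ] H) (hsa : IsSelfAdjoint Γ) (hnn : ∀ x : H, 0 ≤ ⟪Γ x, x⟫)
    (R : ℝ → (H →L[ℝ] H))
    (hR₁ : ∀ α > (0:ℝ), (α • (1 : H →L[ℝ] H) + Γ).comp (R α) = 1)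
    (hR₂ : ∀ α > (0:ℝ), (R α).comp (α • (1 : H →L[ℝ] H) + Γ) = 1) :
    (∀ h : H, h ≠ 0 → 0 < ⟪Γ h, h⟫) ↔
      (∀ h : H, Filter.Tendsto (fun α : ℝ => ‖(α • R α) h‖)
        (nhdsWithin 0 (Set.Ioi 0)) (nhds 0)) :=
  stmt8_general Γ hsa hnn R hR₁ hR₂
end

section
/- Let S(t)w = Σ_{n=1}^∞ e^{−n²t}⟨w,e_n⟩e_n on H = L²(0,1) and Ω as in the heat-equation example (Ωu = 2u₂e₁ + Σ_{n≥2} u_n e_n on U = span{e_n : n ≥ 2}). Then for any 0 ≤ a < b, the Gramian Γ := ∫_a^b S(b−s) Ω Ω* S*(b−s) ds is strictly positive on H: ⟨Γh, h⟩ > 0 for every h ≠ 0. -/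
/-!
For `t ≥ 0` the operator `S t` is diagonal in the basis `e`, hence self-adjoint and contractive,
and it depends norm-continuously on `t > 0`. So the integrand of `Γ` is Bochner integrable and
`⟪Γ h, h⟫ = ∫ ‖Ω* S(b - s) h‖² ds`. If this vanished, `Ω* S(t) h = 0` for almost every, in
particular for two distinct, `t ∈ [0, b - a)`. Testing `S(t) h` against `Ω (e n)` gives
`h_n = 0` for `n ≥ 2` and `2 e^{-t} h_0 + e^{-4t} h_1 = 0`, and two distinct values of `t`
force `h_0 = h_1 = 0`.
-/

open scoped RealInnerProductSpace
open ContinuousLinearMap MeasureTheory Set Real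

namespace HilbertBasis

variable {ι H : Type*} [NormedAddCommGroup H] [InnerProductSpace ℝ H] (e : HilbertBasis ι ℝ H)

def IsDiagonal (T : H →L[ℝ] H) (c : ι → ℝ) : Prop :=
  ∀ w i, e.repr (T w) i = c i * e.repr w i

lemma norm_le_of_forall_abs_repr_le {v w : H} {C : ℝ} (hC : 0 ≤ C)
    (h : ∀ i, |e.repr v i| ≤ C * |e.repr w i|) : ‖v‖ ≤ C * ‖w‖ := by
  have hsq : ‖v‖ ^ 2 ≤ (C * ‖w‖) ^ 2 := by
    rw [mul_pow, ← real_inner_self_eq_norm_sq, ← real_inner_self_eq_norm_sq,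
      ← e.tsum_inner_mul_inner, ← e.tsum_inner_mul_inner, ← tsum_mul_left]
    refine (e.summable_inner_mul_inner v v).tsum_le_tsum (fun i => ?_)
      ((e.summable_inner_mul_inner w w).mul_left _)
    simp only [real_inner_comm (e i), ← e.repr_apply_apply, ← sq, ← sq_abs (e.repr _ i)]
    nlinarith [h i, abs_nonneg (e.repr v i)]
  exact pow_le_pow_iff_left₀ (norm_nonneg v) (by positivity) two_ne_zero |>.mp hsq

lemma isDiagonal_of_apply_eq_tsum {T : H →L[ℝ] H} {c : ι → ℝ} {C : ℝ} (hc : ∀ i, |c i| ≤ C)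
    (hT : ∀ w, T w = ∑' i, (c i * e.repr w i) • e i) : e.IsDiagonal T c := by
  intro w i
  have hmem : Memℓp (fun i => c i * e.repr w i) 2 :=
    ((lp.memℓp (e.repr w)).norm.const_mul C).mono fun i => by
      rw [norm_mul, Real.norm_eq_abs]
      exact mul_le_mul_of_nonneg_right (hc i) (norm_nonneg _)
  rw [hT, (e.hasSum_repr_symm ⟨_, hmem⟩).tsum_eq, LinearIsometryEquiv.apply_symm_apply]

variable {e} {T T' : H →L[ℝ] H} {c c' : ι → ℝ}

lemma IsDiagonal.sub (hT : e.IsDiagonal T c) (hT' : e.IsDiagonal T' c') :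
    e.IsDiagonal (T - T') (c - c') := fun w i => by
  simp only [sub_apply, map_sub, lp.coeFn_sub, Pi.sub_apply, hT w i, hT' w i, sub_mul]

lemma IsDiagonal.opNorm_le (hT : e.IsDiagonal T c) {C : ℝ} (hC : 0 ≤ C) (hc : ∀ i, |c i| ≤ C) :
    ‖T‖ ≤ C :=
  opNorm_le_bound _ hC fun w => e.norm_le_of_forall_abs_repr_le hC fun i => by
    rw [hT, abs_mul]
    exact mul_le_mul_of_nonneg_right (hc i) (abs_nonneg _)

lemma IsDiagonal.isSelfAdjoint [CompleteSpace H] (hT : e.IsDiagonal T c) : IsSelfAdjoint T := by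
  have hinner (x y : H) : ⟪T x, y⟫ = ∑' i, c i * e.repr x i * e.repr y i := by
    rw [← e.tsum_inner_mul_inner]
    congr 1 with i
    rw [real_inner_comm, ← e.repr_apply_apply, ← e.repr_apply_apply, hT]
  refine isSelfAdjoint_iff'.mpr ((eq_adjoint_iff T T).mpr fun x y => ?_).symm
  rw [hinner, real_inner_comm, hinner]
  congr 1 with i
  ring

end HilbertBasis

lemma abs_exp_neg_mul_le_one {K t : ℝ} (hK : 0 ≤ K) (ht : 0 ≤ t) : |exp (-K * t)| ≤ 1 := by
  rw [abs_of_pos (exp_pos _), exp_le_one_iff, neg_mul]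
  exact neg_nonpos.mpr (mul_nonneg hK ht)

lemma abs_exp_neg_mul_sub_exp_neg_mul_le {K ε t t' : ℝ} (hK : 0 ≤ K) (hε : 0 < ε) (ht : ε ≤ t)
    (ht' : ε ≤ t') : |exp (-K * t) - exp (-K * t')| ≤ |t - t'| / ε := by
  wlog hle : t' ≤ t generalizing t t'
  · rw [abs_sub_comm, abs_sub_comm t]
    exact this ht' ht (le_of_not_ge hle)
  have hsplit : exp (-K * t') - exp (-K * t) = exp (-K * t') * (1 - exp (-K * (t - t'))) := by
    rw [mul_sub, mul_one, ← exp_add]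
    ring_nf
  have hgap : 1 - exp (-K * (t - t')) ≤ K * (t - t') := by
    linarith [add_one_le_exp (-K * (t - t'))]
  -- `K ε ≤ K t' ≤ exp (K t')`
  have hdecay : exp (-K * t') * (K * ε) ≤ 1 := by
    have := add_one_le_exp (K * t')
    rw [neg_mul, exp_neg, inv_mul_le_one₀ (exp_pos _)]
    nlinarith
  rw [abs_sub_comm, abs_of_nonneg (sub_nonneg.mpr (exp_le_exp.mpr (by nlinarith))),
    abs_of_nonneg (sub_nonneg.mpr hle), le_div_iff₀ hε, hsplit]
  calc exp (-K * t') * (1 - exp (-K * (t - t'))) * ε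
      ≤ exp (-K * t') * (K * (t - t')) * ε := by
        gcongr
    _ = exp (-K * t') * (K * ε) * (t - t') := by ring
    _ ≤ t - t' := mul_le_of_le_one_left (sub_nonneg.mpr hle) hdecay

section DiagonalSemigroup

variable {ι H : Type*} [NormedAddCommGroup H] [InnerProductSpace ℝ H]
  {e : HilbertBasis ι ℝ H} {ν : ι → ℝ} {S : ℝ → H →L[ℝ] H}

lemma norm_le_one_of_isDiagonal_exp (hν : ∀ i, 0 ≤ ν i)
    (hS : ∀ t ≥ 0, e.IsDiagonal (S t) fun i => exp (-ν i * t)) {t : ℝ} (ht : 0 ≤ t) :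
    ‖S t‖ ≤ 1 :=
  (hS t ht).opNorm_le zero_le_one fun i => abs_exp_neg_mul_le_one (hν i) ht

lemma norm_sub_le_of_isDiagonal_exp (hν : ∀ i, 0 ≤ ν i)
    (hS : ∀ t ≥ 0, e.IsDiagonal (S t) fun i => exp (-ν i * t)) {ε t t' : ℝ} (hε : 0 < ε)
    (ht : ε ≤ t) (ht' : ε ≤ t') : ‖S t - S t'‖ ≤ |t - t'| / ε :=
  ((hS t (hε.le.trans ht)).sub (hS t' (hε.le.trans ht'))).opNorm_le (by positivity)
    fun i => abs_exp_neg_mul_sub_exp_neg_mul_le (hν i) hε ht ht'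

lemma continuousOn_Ioi_of_isDiagonal_exp (hν : ∀ i, 0 ≤ ν i)
    (hS : ∀ t ≥ 0, e.IsDiagonal (S t) fun i => exp (-ν i * t)) : ContinuousOn S (Ioi 0) := by
  intro t ht
  have hlip : LipschitzOnWith (t / 2)⁻¹.toNNReal S (Ici (t / 2)) :=
    LipschitzOnWith.of_dist_le' fun x hx y hy => by
      rw [dist_eq_norm, Real.dist_eq, inv_mul_eq_div]
      exact norm_sub_le_of_isDiagonal_exp hν hS (half_pos ht) hx hy
  exact (hlip.continuousOn.continuousAt (Ici_mem_nhds (half_lt_self ht))).continuousWithinAt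

end DiagonalSemigroup

section OperatorIntegral

variable {H : Type*} [NormedAddCommGroup H] [InnerProductSpace ℝ H] {F : ℝ → H →L[ℝ] H} {a b : ℝ}

lemma IntervalIntegrable.inner_apply (hF : IntervalIntegrable F volume a b) (x y : H) :
    IntervalIntegrable (fun s => ⟪F s x, y⟫) volume a b :=
  ⟨(hF.1.apply_continuousLinearMap x).inner_const y,
    (hF.2.apply_continuousLinearMap x).inner_const y⟩

lemma inner_intervalIntegral_apply [CompleteSpace H] (hF : IntervalIntegrable F volume a b)
    (x y : H) :
    ⟪(∫ s in a..b, F s) x, y⟫ = ∫ s in a..b, ⟪F s x, y⟫ := by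
  have := ((innerSL ℝ y).comp (apply ℝ H x)).intervalIntegral_comp_comm hF
  simp only [comp_apply, apply_apply, innerSL_apply_apply] at this
  simpa only [real_inner_comm y] using this.symm

end OperatorIntegral

section Gramian

variable {H K U : Type*} [NormedAddCommGroup H] [InnerProductSpace ℝ H] [CompleteSpace H]
  [NormedAddCommGroup K] [InnerProductSpace ℝ K] [CompleteSpace K]
  [NormedAddCommGroup U] [InnerProductSpace ℝ U] [CompleteSpace U]

lemma inner_comp_comp_adjoint_comp_adjoint_apply_self (A : K →L[ℝ] H) (B : U →L[ℝ] K) (h : H) :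
    ⟪A.comp (B.comp ((adjoint B).comp (adjoint A))) h, h⟫ = ‖adjoint B (adjoint A h)‖ ^ 2 := by
  rw [comp_apply, comp_apply, comp_apply, ← adjoint_inner_right A, ← adjoint_inner_right B,
    real_inner_self_eq_norm_sq]

lemma norm_comp_comp_adjoint_comp_adjoint_le (A : K →L[ℝ] H) (B : U →L[ℝ] K) :
    ‖A.comp (B.comp ((adjoint B).comp (adjoint A)))‖ ≤ ‖A‖ ^ 2 * ‖B‖ ^ 2 :=
  calc ‖A.comp (B.comp ((adjoint B).comp (adjoint A)))‖
      ≤ ‖A‖ * (‖B‖ * (‖adjoint B‖ * ‖adjoint A‖)) := by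
        refine (opNorm_comp_le _ _).trans (mul_le_mul_of_nonneg_left ?_ (norm_nonneg _))
        refine (opNorm_comp_le _ _).trans (mul_le_mul_of_nonneg_left ?_ (norm_nonneg _))
        exact opNorm_comp_le _ _
    _ = ‖A‖ ^ 2 * ‖B‖ ^ 2 := by
        rw [LinearIsometryEquiv.norm_map, LinearIsometryEquiv.norm_map]
        ring

end Gramian

lemma intervalIntegrable_of_continuousOn_Ioo_of_norm_le {E : Type*} [NormedAddCommGroup E]
    {F : ℝ → E} {a b C : ℝ} (hab : a ≤ b) (hF : ContinuousOn F (Ioo a b))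
    (hC : ∀ s ∈ Ioo a b, ‖F s‖ ≤ C) : IntervalIntegrable F volume a b :=
  (intervalIntegrable_iff_integrableOn_Ioo_of_le hab).mpr <|
    .of_bound measure_Ioo_lt_top (hF.aestronglyMeasurable measurableSet_Ioo) C
      ((ae_restrict_iff' measurableSet_Ioo).mpr (ae_of_all _ hC))

lemma intervalIntegrable_gramian_of_isDiagonal_exp {ι H U : Type*} [NormedAddCommGroup H]
    [InnerProductSpace ℝ H] [CompleteSpace H] [NormedAddCommGroup U] [InnerProductSpace ℝ U]
    [CompleteSpace U] {e : HilbertBasis ι ℝ H} {ν : ι → ℝ} {S : ℝ → H →L[ℝ] H}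
    (hν : ∀ i, 0 ≤ ν i) (hS : ∀ t ≥ 0, e.IsDiagonal (S t) fun i => exp (-ν i * t))
    (Ω : U →L[ℝ] H) {a b : ℝ} (hab : a ≤ b) :
    IntervalIntegrable (fun s => (S (b - s)).comp (Ω.comp ((adjoint Ω).comp (adjoint (S (b - s))))))
      volume a b := by
  have hS_cont : ContinuousOn (fun s => S (b - s)) (Ioo a b) :=
    (continuousOn_Ioi_of_isDiagonal_exp hν hS).comp (continuousOn_const.sub continuousOn_id)
      fun s hs => sub_pos.mpr hs.2
  refine intervalIntegrable_of_continuousOn_Ioo_of_norm_le hab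
    (hS_cont.clm_comp (continuousOn_const.clm_comp (continuousOn_const.clm_comp
      ((adjoint : (H →L[ℝ] H) ≃ₗᵢ⋆[ℝ] _).continuous.comp_continuousOn hS_cont))))
    (C := ‖Ω‖ ^ 2) fun s hs => ?_
  refine (norm_comp_comp_adjoint_comp_adjoint_le _ _).trans ?_
  exact mul_le_of_le_one_left (sq_nonneg _) <| pow_le_one₀ (norm_nonneg _) <|
    norm_le_one_of_isDiagonal_exp hν hS (sub_nonneg.mpr hs.2.le)

lemma intervalIntegral_pos_of_subsingleton_zeros {g : ℝ → ℝ} {a b : ℝ} (hab : a < b)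
    (hg : IntervalIntegrable g volume a b) (hg₀ : ∀ s ∈ Ioc a b, 0 ≤ g s)
    (hzeros : {s ∈ Ioc a b | g s = 0}.Subsingleton) : 0 < ∫ s in a..b, g s := by
  have hnonneg : 0 ≤ᵐ[volume.restrict (uIoc a b)] g := by
    rw [uIoc_of_le hab.le]
    exact (ae_restrict_iff' measurableSet_Ioc).mpr (ae_of_all _ hg₀)
  have hsupp : Ioc a b \ {s ∈ Ioc a b | g s = 0} ⊆ Function.support g ∩ Ioc a b :=
    fun s hs => ⟨fun h0 => hs.2 ⟨hs.1, h0⟩, hs.1⟩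
  refine (intervalIntegral.integral_pos_iff_support_of_nonneg_ae' hnonneg hg).mpr ⟨hab, ?_⟩
  calc 0 < volume (Ioc a b) := by simpa [Real.volume_Ioc] using hab
    _ = volume (Ioc a b \ {s ∈ Ioc a b | g s = 0}) :=
        (measure_sdiff_null (hzeros.measure_zero volume)).symm
    _ ≤ volume (Function.support g ∩ Ioc a b) := measure_mono hsupp

section HeatEquation

variable {H : Type*} [NormedAddCommGroup H] [InnerProductSpace ℝ H] [CompleteSpace H]
  {e : HilbertBasis ℕ ℝ H} {U : Submodule ℝ H} [CompleteSpace U] {Ω : U →L[ℝ] H}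

lemma repr_eq_zero_of_adjoint_apply_eq_zero
    (hU : U = (Submodule.span ℝ (e '' Set.Ici 1)).topologicalClosure)
    (hΩ : ∀ u : U, Ω u = (2 * e.repr (u : H) 1) • e 0 + (u : H)) {w : H}
    (hw : adjoint Ω w = 0) : (∀ n ≥ 2, e.repr w n = 0) ∧ 2 * e.repr w 0 + e.repr w 1 = 0 := by
  have hmem (n : ℕ) (hn : 1 ≤ n) : e n ∈ U :=
    hU ▸ Submodule.le_topologicalClosure _ (Submodule.subset_span ⟨n, hn, rfl⟩)
  have horth (n : ℕ) (hn : 1 ≤ n) :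
      (2 * e.repr (e n) 1) * e.repr w 0 + e.repr w n = 0 := by
    have := adjoint_inner_right Ω ⟨e n, hmem n hn⟩ w
    rw [hw, inner_zero_right, hΩ, inner_add_left, real_inner_smul_left] at this
    simpa only [e.repr_apply_apply] using this.symm
  refine ⟨fun n hn => ?_, ?_⟩
  · simpa [e.repr_self, lp.single_apply, show (1 : ℕ) ≠ n by omega] using horth n (by omega)
  · simpa [e.repr_self] using horth 1 le_rfl

lemma eq_zero_of_adjoint_apply_heat_eq_zero
    (hU : U = (Submodule.span ℝ (e '' Set.Ici 1)).topologicalClosure)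
    (hΩ : ∀ u : U, Ω u = (2 * e.repr (u : H) 1) • e 0 + (u : H)) {S : ℝ → H →L[ℝ] H}
    (hS : ∀ t ≥ 0, e.IsDiagonal (S t) fun n : ℕ => exp (-((n : ℝ) + 1) ^ 2 * t))
    {h : H} {t₁ t₂ : ℝ} (ht₁ : 0 ≤ t₁) (ht₂ : 0 ≤ t₂) (hne : t₁ ≠ t₂)
    (h₁ : adjoint Ω (S t₁ h) = 0) (h₂ : adjoint Ω (S t₂ h) = 0) : h = 0 := by
  obtain ⟨hhigh, hlow₁⟩ := repr_eq_zero_of_adjoint_apply_eq_zero hU hΩ h₁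
  obtain ⟨-, hlow₂⟩ := repr_eq_zero_of_adjoint_apply_eq_zero hU hΩ h₂
  simp only [hS t₁ ht₁ h, hS t₂ ht₂ h] at hhigh hlow₁ hlow₂
  norm_num at hlow₁ hlow₂
  have h1 : e.repr h 1 = 0 := by
    have hdet : exp (-t₂ + -(4 * t₁)) - exp (-t₁ + -(4 * t₂)) ≠ 0 := by
      rw [sub_ne_zero, Ne, exp_eq_exp]
      contrapose hne
      linarith
    refine (mul_eq_zero.mp ?_).resolve_left hdet
    rw [exp_add, exp_add]
    linear_combination exp (-t₂) * hlow₁ - exp (-t₁) * hlow₂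
  have h0 : e.repr h 0 = 0 := by
    rw [h1, mul_zero, add_zero, mul_eq_zero, mul_eq_zero] at hlow₁
    exact (hlow₁.resolve_left two_ne_zero).resolve_left (exp_pos _).ne'
  refine e.repr.map_eq_zero_iff.mp (lp.ext (funext fun n => ?_))
  match n, hhigh n with
  | 0, _ => exact h0
  | 1, _ => exact h1
  | n + 2, hn => exact (mul_eq_zero.mp (hn (by omega))).resolve_left (exp_pos _).ne'

end HeatEquation

theorem stmt17_general
    {H : Type*} [NormedAddCommGroup H] [InnerProductSpace ℝ H] [CompleteSpace H]
    (e : HilbertBasis ℕ ℝ H)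
    -- the diagonal heat semigroup (e 0 = e₁, eigenvalue of e n is (n+1)²)
    (S : ℝ → (H →L[ℝ] H))
    (hS : ∀ t ≥ (0:ℝ), ∀ w : H,
      S t w = ∑' n : ℕ, (Real.exp (-((n : ℝ) + 1) ^ 2 * t) * e.repr w n) • e n)
    -- U = span closure of {e n : n ≥ 1}
    (U : Submodule ℝ H)
    (hU : U = (Submodule.span ℝ (e '' Set.Ici 1)).topologicalClosure)
    [CompleteSpace U]
    (Ω : U →L[ℝ] H)
    (hΩ : ∀ u : U, Ω u = (2 * e.repr (u : H) 1) • e 0 + (u : H))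
    (a b : ℝ) (hab : a < b)
    (Γ : H →L[ℝ] H)
    (hΓ : Γ = ∫ s in a..b,
      (S (b - s)).comp (Ω.comp ((adjoint Ω).comp (adjoint (S (b - s))))) ) :
    ∀ h : H, h ≠ 0 → 0 < ⟪Γ h, h⟫ := by
  intro h hh
  have hν (n : ℕ) : 0 ≤ ((n : ℝ) + 1) ^ 2 := sq_nonneg _
  have hdiag : ∀ t ≥ 0, e.IsDiagonal (S t) fun n : ℕ => exp (-((n : ℝ) + 1) ^ 2 * t) :=
    fun t ht => e.isDiagonal_of_apply_eq_tsum (fun n => abs_exp_neg_mul_le_one (hν n) ht) (hS t ht)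
  set F : ℝ → H →L[ℝ] H := fun s =>
    (S (b - s)).comp (Ω.comp ((adjoint Ω).comp (adjoint (S (b - s)))))
  have hF : IntervalIntegrable F volume a b :=
    intervalIntegrable_gramian_of_isDiagonal_exp hν hdiag Ω hab.le
  have hform (s : ℝ) : ⟪F s h, h⟫ = ‖adjoint Ω (adjoint (S (b - s)) h)‖ ^ 2 :=
    inner_comp_comp_adjoint_comp_adjoint_apply_self _ _ _
  rw [hΓ, inner_intervalIntegral_apply hF]
  refine intervalIntegral_pos_of_subsingleton_zeros hab (hF.inner_apply h h)
    (fun s _ => hform s ▸ sq_nonneg _) ?_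
  rintro s₁ ⟨hs₁, h₁⟩ s₂ ⟨hs₂, h₂⟩
  by_contra hne
  have hadj (s : ℝ) (hs : s ∈ Ioc a b) : adjoint (S (b - s)) = S (b - s) :=
    isSelfAdjoint_iff'.mp (hdiag _ (sub_nonneg.mpr hs.2)).isSelfAdjoint
  rw [hform, hadj s₁ hs₁, sq_eq_zero_iff, norm_eq_zero] at h₁
  rw [hform, hadj s₂ hs₂, sq_eq_zero_iff, norm_eq_zero] at h₂
  exact hh <| eq_zero_of_adjoint_apply_heat_eq_zero hU hΩ hdiag (sub_nonneg.mpr hs₁.2)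
    (sub_nonneg.mpr hs₂.2) (fun heq => hne (by linarith)) h₁ h₂

theorem stmt17
    {H : Type*} [NormedAddCommGroup H] [InnerProductSpace ℝ H] [CompleteSpace H]
    (e : HilbertBasis ℕ ℝ H)
    -- the diagonal heat semigroup (e 0 = e₁, eigenvalue of e n is (n+1)²)
    (S : ℝ → (H →L[ℝ] H))
    (hS : ∀ t ≥ (0:ℝ), ∀ w : H,
      S t w = ∑' n : ℕ, (Real.exp (-((n : ℝ) + 1) ^ 2 * t) * e.repr w n) • e n)
    -- U = span closure of {e n : n ≥ 1}
    (U : Submodule ℝ H)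
    (hU : U = (Submodule.span ℝ (e '' Set.Ici 1)).topologicalClosure)
    [CompleteSpace U]
    (Ω : U →L[ℝ] H)
    (hΩ : ∀ u : U, Ω u = (2 * e.repr (u : H) 1) • e 0 + (u : H))
    (a b : ℝ) (ha : 0 ≤ a) (hab : a < b)
    (Γ : H →L[ℝ] H)
    (hΓ : Γ = ∫ s in a..b,
      (S (b - s)).comp (Ω.comp ((adjoint Ω).comp (adjoint (S (b - s))))) ) :
    ∀ h : H, h ≠ 0 → 0 < ⟪Γ h, h⟫ :=
  stmt17_general e S hS U hU Ω hΩ a b hab Γ hΓ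
end
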